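/- arXiv:2107.09590 — 3 statements merged into one kernel-verified Lean document; each statement's English description precedes it below -/
import Mathlib

section
/- (h-reduction) Let X and Y be disjoint finite alphabets with |Y| ≤ c, and let r ≥ 1. Then h_{c+r}(X) = Σ_{i=0}^{c} (-1)^{c-i} · s(r−1, c−i)(X∪Y) · h_i(X), where s(i,j)(Z) := Σ_{k+l=j}(-1)^k h_{i+k+1}(Z) e_l(Z) is the hook Schur polynomial s_{(i+1,1^j)} of the alphabet Z = X∪Y. -/
/-!
Use the generating series `E_Z(t) = ∏_{z ∈ Z} (1 - z t)` and `H_Z(t) = ∏_{z ∈ Z} 1/(1 - z t)`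
of an alphabet, so that `E_Z H_Z = 1` and both are multiplicative under disjoint union. For
`Z = X ∪ Y` this gives `H_X = H_Z E_Y` and `E_Y = E_Z H_X`. Since `E_Y` is a polynomial of degree
`|Y| ≤ c`, the coefficient of `t^(c+r)` in `H_Z E_Y` only involves the tail
`G = ∑_k h_(k+r)(Z) t^k` of `H_Z`; it is the coefficient of `t^c` in `G E_Y = (G E_Z) H_X`, and the
coefficients of `G E_Z` are the signed hook Schur polynomials `(-1)^j s(r-1, j)(Z)`.
-/

open Finset

variable {R : Type*} [CommRing R]

/-- The elementary symmetric polynomial `e k` of a finite family of ring elements. -/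
def esym {ι : Type*} [Fintype ι] [DecidableEq ι] (x : ι → R) (k : ℕ) : R :=
  ∑ s ∈ Finset.univ.powersetCard k, ∏ i ∈ s, x i

/-- The complete homogeneous symmetric polynomial `h k` of a finite family of ring
elements (sum of all monomials of degree `k`). -/
def hsym {ι : Type*} [Fintype ι] [DecidableEq ι] (x : ι → R) (k : ℕ) : R :=
  ∑ μ : Sym ι k, (μ.1.map x).prod

/-- The hook Schur polynomial `s(i,j) = s_{(i+1,1^j)}` of a finite family. -/
def hookS {ι : Type*} [Fintype ι] [DecidableEq ι] (x : ι → R) (i j : ℕ) : R :=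
  ∑ p ∈ Finset.HasAntidiagonal.antidiagonal j, (-1 : R) ^ p.1 * hsym x (i + p.1 + 1) * esym x p.2

/-- The complete symmetric function `h j` of the difference alphabet `X - X'`. -/
def hdiff {ι κ : Type*} [Fintype ι] [DecidableEq ι] [Fintype κ] [DecidableEq κ]
    (x : ι → R) (x' : κ → R) (j : ℕ) : R :=
  ∑ p ∈ Finset.HasAntidiagonal.antidiagonal j, (-1 : R) ^ p.2 * hsym x p.1 * esym x' p.2

/-- The elementary symmetric function `e j` of the difference alphabet `X - X'`. -/
def ediff {ι κ : Type*} [Fintype ι] [DecidableEq ι] [Fintype κ] [DecidableEq κ]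
    (x : ι → R) (x' : κ → R) (j : ℕ) : R :=
  ∑ p ∈ Finset.HasAntidiagonal.antidiagonal j, (-1 : R) ^ p.2 * esym x p.1 * hsym x' p.2

/-- The power sum `p k` of a finite family of ring elements. -/
def psum' {ι : Type*} [Fintype ι] (x : ι → R) (k : ℕ) : R :=
  ∑ i, x i ^ k

/-- The elementary symmetric polynomial of a multiset of ring elements. -/
def esymM (s : Multiset R) (k : ℕ) : R :=
  ((s.powersetCard k).map Multiset.prod).sum

open PowerSeries

lemma Fintype.prod_multiset_map_count {ι M : Type*} [Fintype ι] [DecidableEq ι] [CommMonoid M]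
    (s : Multiset ι) (f : ι → M) : (s.map f).prod = ∏ i, f i ^ s.count i := by
  rw [Finset.prod_multiset_map_count]
  exact Finset.prod_subset (subset_univ _) fun i _ hi => by
    rw [Multiset.count_eq_zero.2 (by simpa using hi), pow_zero]

lemma esym_eq_zero_of_card_lt {ι : Type*} [Fintype ι] [DecidableEq ι] (x : ι → R) {n : ℕ}
    (h : Fintype.card ι < n) : esym x n = 0 := by
  rw [esym, powersetCard_eq_empty.2 (by simpa using h), sum_empty]

lemma PowerSeries.one_sub_C_mul_X_mul_mk_pow (a : R) :
    (1 - C a * X) * mk (fun k => a ^ k) = 1 := by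
  simpa [rescale_mk, mul_comm] using congrArg (rescale a) (mk_one_mul_one_sub_eq_one (S := R))

lemma PowerSeries.coeff_add_mul_eq_of_coeff_eq_zero {A : Type*} [Semiring A] {n : ℕ}
    (m : ℕ) (f : A⟦X⟧) {g : A⟦X⟧} (hg : ∀ k, n < k → coeff k g = 0) :
    coeff (n + m) (f * g) = coeff n ((mk fun i => coeff (i + m) f) * g) := by
  have htrunc : coeff (n + m) ((trunc m f : A⟦X⟧) * g) = 0 := by
    rw [coeff_mul]
    refine sum_eq_zero fun p hp => ?_
    rw [HasAntidiagonal.mem_antidiagonal] at hp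
    rw [Polynomial.coeff_coe, coeff_trunc]
    split_ifs
    · rw [hg p.2 (by omega), mul_zero]
    · rw [zero_mul]
  conv_lhs => rw [eq_X_pow_mul_shift_add_trunc m f]
  rw [add_mul, map_add, htrunc, add_zero, mul_assoc, coeff_X_pow_mul]

noncomputable def hsymSeries {ι : Type*} [Fintype ι] (x : ι → R) : R⟦X⟧ :=
  ∏ i, mk fun k => x i ^ k

lemma coeff_hsymSeries {ι : Type*} [Fintype ι] [DecidableEq ι] (x : ι → R) (n : ℕ) :
    coeff n (hsymSeries x) = hsym x n := by
  rw [hsymSeries, coeff_prod, hsym]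
  simp only [coeff_mk]
  symm
  refine Finset.sum_bij' (fun μ _ => Multiset.toFinsupp μ.1)
    (fun l hl => ⟨l.toMultiset, ?_⟩) (fun μ _ => ?_) (fun _ _ => mem_univ _)
    (fun μ _ => Sym.coe_injective ?_) (fun l _ => ?_) (fun μ _ => ?_)
  · simpa [Finsupp.sum_fintype] using (mem_finsuppAntidiag.1 hl).1
  · simp only [mem_finsuppAntidiag, Multiset.toFinsupp_apply, subset_univ, and_true]
    exact (Multiset.sum_count_eq_card fun i _ => mem_univ i).trans μ.2
  · simp
  · simp
  · simp [Fintype.prod_multiset_map_count]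

noncomputable def esymSeries {ι : Type*} [Fintype ι] (x : ι → R) : R⟦X⟧ :=
  ∏ i, (1 - C (x i) * X)

lemma coeff_esymSeries {ι : Type*} [Fintype ι] [DecidableEq ι] (x : ι → R) (n : ℕ) :
    coeff n (esymSeries x) = (-1) ^ n * esym x n := by
  have h : esymSeries x = ∏ i, (1 + C (-x i) * X) := by
    simp only [esymSeries, map_neg, neg_mul, sub_eq_add_neg]
  rw [h, prod_one_add, map_sum, esym, mul_sum, powersetCard_eq_filter, sum_filter]
  refine sum_congr rfl fun t _ => ?_
  rw [prod_mul_distrib, prod_const, ← map_prod, coeff_C_mul_X_pow, prod_neg]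
  rcases eq_or_ne t.card n with rfl | ht
  · simp
  · simp [ht, ht.symm]

lemma esymSeries_mul_hsymSeries {ι : Type*} [Fintype ι] (x : ι → R) :
    esymSeries x * hsymSeries x = 1 := by
  rw [esymSeries, hsymSeries, ← prod_mul_distrib]
  exact prod_eq_one fun i _ => one_sub_C_mul_X_mul_mk_pow (x i)

lemma hsymSeries_sumElim {ι κ : Type*} [Fintype ι] [Fintype κ] (x : ι → R) (y : κ → R) :
    hsymSeries (Sum.elim x y) = hsymSeries x * hsymSeries y :=
  Fintype.prod_sum_type _

lemma esymSeries_sumElim {ι κ : Type*} [Fintype ι] [Fintype κ] (x : ι → R) (y : κ → R) :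
    esymSeries (Sum.elim x y) = esymSeries x * esymSeries y :=
  Fintype.prod_sum_type _

lemma coeff_mk_hsym_mul_esymSeries {ι : Type*} [Fintype ι] [DecidableEq ι] (x : ι → R)
    (i j : ℕ) :
    coeff j ((mk fun k => hsym x (k + (i + 1))) * esymSeries x) = (-1) ^ j * hookS x i j := by
  rw [coeff_mul, hookS, mul_sum]
  refine sum_congr rfl fun p hp => ?_
  have hsq : (-1 : R) ^ p.1 * (-1) ^ p.1 = 1 := by rw [← mul_pow]; simp
  rw [← HasAntidiagonal.mem_antidiagonal.1 hp, coeff_mk, coeff_esymSeries, pow_add,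
    add_comm p.1, add_right_comm i 1]
  linear_combination -(hsym x (i + p.1 + 1) * (-1) ^ p.2 * esym x p.2) * hsq

theorem h_reduction {ι κ : Type*} [Fintype ι] [DecidableEq ι] [Fintype κ] [DecidableEq κ]
    (c r : ℕ) (hr : 1 ≤ r) (hY : Fintype.card κ ≤ c) (x : ι → R) (y : κ → R) :
    hsym x (c + r) =
      ∑ i ∈ Finset.range (c + 1),
        (-1 : R) ^ (c - i) * hookS (Sum.elim x y) (r - 1) (c - i) * hsym x i := by
  obtain ⟨s, rfl⟩ : ∃ s, r = s + 1 := ⟨r - 1, by omega⟩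
  set z := Sum.elim x y
  have hHz : hsymSeries z * esymSeries y = hsymSeries x := by
    rw [hsymSeries_sumElim, mul_assoc, mul_comm (hsymSeries y), esymSeries_mul_hsymSeries, mul_one]
  have hEz : esymSeries z * hsymSeries x = esymSeries y := by
    rw [esymSeries_sumElim, mul_right_comm, esymSeries_mul_hsymSeries, one_mul]
  have hEy : ∀ k, c < k → coeff k (esymSeries y) = 0 := fun k hk => by
    rw [coeff_esymSeries, esym_eq_zero_of_card_lt y (hY.trans_lt hk), mul_zero]
  calc hsym x (c + (s + 1))
      = coeff (c + (s + 1)) (hsymSeries z * esymSeries y) := by rw [hHz, coeff_hsymSeries]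
    _ = coeff c (hsymSeries x * ((mk fun k => hsym z (k + (s + 1))) * esymSeries z)) := by
        rw [coeff_add_mul_eq_of_coeff_eq_zero _ _ hEy, mul_left_comm, mul_comm _ (esymSeries z),
          hEz]
        simp only [coeff_hsymSeries]
    _ = _ := by
        rw [coeff_mul, Nat.sum_antidiagonal_eq_sum_range_succ_mk]
        simp only [coeff_hsymSeries, coeff_mk_hsym_mul_esymSeries, add_tsub_cancel_right]
        exact sum_congr rfl fun i _ => mul_comm _ _
end

section
/- Let a ≥ b ≥ 1 and let M be the (a+b)×(a+b) matrix over k[x_1,...,x_{a+b}, w_{a+1},...,w_{a+b}] whose rows are: for 1 ≤ i ≤ a, the row (x_j^{a-i})_{j=1,...,a+b}; and for 1 ≤ s ≤ b, the row whose j-th entry is 0 for j ≤ a and x_j^{b-s}·w_j for a+1 ≤ j ≤ a+b. Then det(M) = ∏_{1≤i<j≤a}(x_i − x_j) · ∏_{j=a+1}^{a+b} w_j · ∏_{a+1≤i<j≤a+b}(x_i − x_j). -/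
open Finset

variable {R : Type*} [CommRing R]

/-! Ordering the indices as `Fin a ⊕ Fin b`, the matrix has a zero lower-left block, so its
determinant is the product of the determinants of the two diagonal blocks. Both are Vandermonde
determinants in decreasing powers (transposes of `projVandermonde 1 v`), the second one after the
weight `w j` is pulled out of column `j`. -/

open Matrix

lemma det_of_pow_rev {n : ℕ} (v : Fin n → R) :
    (of fun i j : Fin n => v j ^ (n - 1 - (i : ℕ))).det =
      ∏ i : Fin n, ∏ j ∈ Ioi i, (v i - v j) := by
  have : (of fun i j : Fin n => v j ^ (n - 1 - (i : ℕ))) = (projVandermonde 1 v)ᵀ := by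
    ext i j
    simp only [of_apply, transpose_apply, projVandermonde_apply, Pi.one_apply, one_pow, one_mul,
      Fin.val_rev]
    congr 1
    omega
  simp [this, det_projVandermonde]

lemma det_of_pow_rev_mul {n : ℕ} (v w : Fin n → R) :
    (of fun i j : Fin n => v j ^ (n - 1 - (i : ℕ)) * w j).det =
      (∏ j, w j) * ∏ i : Fin n, ∏ j ∈ Ioi i, (v i - v j) := by
  rw [← det_of_pow_rev, ← det_mul_row]
  simp only [of_apply, mul_comm]

lemma det_fin_add_eq_mul_of_lowerLeft_eq_zero {a b : ℕ}
    (M : Matrix (Fin (a + b)) (Fin (a + b)) R)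
    (h : ∀ i j, M (Fin.natAdd a i) (Fin.castAdd b j) = 0) :
    M.det = (M.submatrix (Fin.castAdd b) (Fin.castAdd b)).det *
      (M.submatrix (Fin.natAdd a) (Fin.natAdd a)).det := by
  rw [← det_submatrix_equiv_self finSumFinEquiv M, ← fromBlocks_toBlocks (M.submatrix _ _)]
  have : (M.submatrix finSumFinEquiv finSumFinEquiv).toBlocks₂₁ = 0 := by
    ext i j; exact h i j
  rw [this, det_fromBlocks_zero₂₁]
  rfl

namespace Fin

def shiftEmbedding (c n : ℕ) : Fin n ↪ ℕ := valEmbedding.trans (addLeftEmbedding (c + 1))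

@[simp]
lemma shiftEmbedding_apply (c n : ℕ) (j : Fin n) : shiftEmbedding c n j = c + 1 + j := rfl

lemma map_shiftEmbedding_univ (c n : ℕ) :
    univ.map (shiftEmbedding c n) = Icc (c + 1) (c + n) := by
  ext k
  simp only [mem_map, mem_univ, true_and, mem_Icc, shiftEmbedding_apply]
  constructor
  · rintro ⟨j, rfl⟩
    omega
  · intro hk
    exact ⟨⟨k - (c + 1), by omega⟩, by dsimp only; omega⟩

lemma map_shiftEmbedding_Ioi (c n : ℕ) (i : Fin n) :
    (Ioi i).map (shiftEmbedding c n) = Icc (c + i + 1 + 1) (c + n) := by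
  ext k
  simp only [mem_map, mem_Ioi, mem_Icc, lt_def, shiftEmbedding_apply]
  constructor
  · rintro ⟨j, hij, rfl⟩
    omega
  · intro hk
    exact ⟨⟨k - (c + 1), by omega⟩, by dsimp only; omega, by dsimp only; omega⟩

end Fin

lemma prod_Icc_eq_prod_fin {M : Type*} [CommMonoid M] (c n : ℕ) (g : ℕ → M) :
    ∏ j ∈ Icc (c + 1) (c + n), g j = ∏ j : Fin n, g (c + j + 1) := by
  rw [← Fin.map_shiftEmbedding_univ, prod_map]
  simp [add_right_comm]

lemma prod_Icc_pairs_eq_prod_fin {M : Type*} [CommMonoid M] (c n : ℕ) (f : ℕ → ℕ → M) :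
    ∏ i ∈ Icc (c + 1) (c + n), ∏ j ∈ Icc (i + 1) (c + n), f i j =
      ∏ i : Fin n, ∏ j ∈ Ioi i, f (c + i + 1) (c + j + 1) := by
  rw [prod_Icc_eq_prod_fin]
  refine prod_congr rfl fun i _ => ?_
  rw [← Fin.map_shiftEmbedding_Ioi, prod_map]
  simp [add_right_comm]

theorem haiman_determinant_max_key_shape_reduced_general (a b : ℕ)
    (x w : ℕ → R) :
    Matrix.det (Matrix.of fun i j : Fin (a + b) =>
        if (i : ℕ) < a then x ((j : ℕ) + 1) ^ (a - 1 - (i : ℕ))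
        else if (j : ℕ) < a then 0
        else x ((j : ℕ) + 1) ^ (b - 1 - ((i : ℕ) - a)) * w ((j : ℕ) + 1)) =
      (∏ i ∈ Finset.Icc 1 a, ∏ j ∈ Finset.Icc (i + 1) a, (x i - x j)) *
        (∏ j ∈ Finset.Icc (a + 1) (a + b), w j) *
        ∏ i ∈ Finset.Icc (a + 1) (a + b), ∏ j ∈ Finset.Icc (i + 1) (a + b), (x i - x j) := by
  rw [det_fin_add_eq_mul_of_lowerLeft_eq_zero _ fun i j => by simp]
  simp only [submatrix, of_apply, Fin.val_castAdd, Fin.val_natAdd, Fin.is_lt, if_true,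
    add_lt_iff_neg_left, not_lt_zero, if_false, add_tsub_cancel_left]
  have hpairs := prod_Icc_pairs_eq_prod_fin 0 a fun i j => x i - x j
  simp only [zero_add] at hpairs
  rw [det_of_pow_rev, det_of_pow_rev_mul, hpairs, prod_Icc_eq_prod_fin, prod_Icc_pairs_eq_prod_fin]
  ring

theorem haiman_determinant_max_key_shape_reduced (a b : ℕ) (hb : 1 ≤ b) (hab : b ≤ a)
    (x w : ℕ → R) :
    Matrix.det (Matrix.of fun i j : Fin (a + b) =>
        if (i : ℕ) < a then x ((j : ℕ) + 1) ^ (a - 1 - (i : ℕ))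
        else if (j : ℕ) < a then 0
        else x ((j : ℕ) + 1) ^ (b - 1 - ((i : ℕ) - a)) * w ((j : ℕ) + 1)) =
      (∏ i ∈ Finset.Icc 1 a, ∏ j ∈ Finset.Icc (i + 1) a, (x i - x j)) *
        (∏ j ∈ Finset.Icc (a + 1) (a + b), w j) *
        ∏ i ∈ Finset.Icc (a + 1) (a + b), ∏ j ∈ Finset.Icc (i + 1) (a + b), (x i - x j) :=
  haiman_determinant_max_key_shape_reduced_general a b x w
end

section
/- Let a ≥ b ≥ 1, and work in k[x_1,...,x_{a+b}, c_1, c_2]. Set y_j := c_1 for 1 ≤ j ≤ a and y_j := c_2 for a+1 ≤ j ≤ a+b. Let M be the (a+b)×(a+b) matrix whose rows are: for 1 ≤ i ≤ a, the row (x_j^{a-i})_{j=1,...,a+b}; and for 1 ≤ s ≤ b, the row (x_j^{b-s}·y_j)_{j=1,...,a+b}. Then det(M) = (c_2 − c_1)^b · ∏_{1≤i<j≤a}(x_i − x_j) · ∏_{a+1≤i<j≤a+b}(x_i − x_j). -/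
open Finset

variable {R : Type*} [CommRing R]

/-! Subtracting `c₁` times the last `b` power rows `x^{b-1}, …, 1` (which exist as `b ≤ a`) from
the `b` rows `x^{b-1} y, …, y` replaces `y` by `y - c₁`, which vanishes on the first `a` columns
and equals `c₂ - c₁` on the last `b`. The matrix becomes block upper triangular, with two
Vandermonde blocks on the diagonal, one of them scaled by `c₂ - c₁`. -/

open Matrix

theorem Matrix.det_fromBlocks_mul₂₁ {m n : Type*} [Fintype m] [DecidableEq m] [Fintype n]
    [DecidableEq n] (A : Matrix m m R) (B : Matrix m n R) (K : Matrix n m R) (D : Matrix n n R) :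
    (fromBlocks A B (K * A) D).det = A.det * (D - K * B).det := by
  have hfactor : fromBlocks A B (K * A) D = fromBlocks 1 0 K 1 * fromBlocks A B 0 (D - K * B) := by
    simp [fromBlocks_multiply]
  rw [hfactor, det_mul, det_fromBlocks_zero₁₂, det_fromBlocks_zero₂₁]
  simp

-- `(rectVandermonde 1 v n)ᵀ i j = v j ^ (n - 1 - i)`: the power rows of the key-shape matrix.
theorem Matrix.det_transpose_rectVandermonde_one {n : ℕ} (v : Fin n → R) :
    (rectVandermonde 1 v n)ᵀ.det = ∏ i : Fin n, ∏ j ∈ Ioi i, (v i - v j) := by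
  rw [det_transpose]
  exact (det_projVandermonde 1 v).trans (by simp)

theorem Matrix.one_submatrix_natAdd_mul_transpose_rectVandermonde_one {ι : Type*} (v : ι → R)
    (d n : ℕ) :
    (1 : Matrix (Fin (d + n)) (Fin (d + n)) R).submatrix (Fin.natAdd d) id *
      (rectVandermonde 1 v (d + n))ᵀ = (rectVandermonde 1 v n)ᵀ := by
  refine (one_submatrix_mul (Fin.natAdd d) (Equiv.refl _) _).trans ?_
  ext i j
  simp only [submatrix_apply, transpose_apply, rectVandermonde_apply, Pi.one_apply, one_pow,
    one_mul, Equiv.refl_symm, Equiv.coe_refl, Function.id_comp, id, Fin.val_rev, Fin.val_natAdd]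
  congr 1
  omega

theorem Fin.prod_Ioi_eq_prod_Ioo_val {M : Type*} [CommMonoid M] {n : ℕ} (i : Fin n) (g : ℕ → M) :
    ∏ j ∈ Ioi i, g j = ∏ j ∈ Ioo (i : ℕ) n, g j := by
  rw [← Fin.map_valEmbedding_Ioi, prod_map]
  rfl

theorem Finset.prod_Icc_Icc_eq_prod_fin_Ioi {M : Type*} [CommMonoid M] (t n : ℕ)
    (f : ℕ → ℕ → M) :
    ∏ i ∈ Icc (t + 1) (t + n), ∏ j ∈ Icc (i + 1) (t + n), f i j =
      ∏ i : Fin n, ∏ j ∈ Ioi i, f (t + i + 1) (t + j + 1) := by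
  calc _ = ∏ i ∈ range n, ∏ j ∈ Ioo i n, f (t + i + 1) (t + j + 1) := by
        refine prod_nbij' (· - t - 1) (t + · + 1) ?_ ?_ ?_ ?_ fun i hi => ?_
        any_goals (intro i hi; simp only [mem_Icc, mem_range] at hi ⊢; omega)
        rw [mem_Icc] at hi
        refine prod_nbij' (· - t - 1) (t + · + 1) ?_ ?_ ?_ ?_ fun j hj => ?_
        any_goals (intro j hj; simp only [mem_Icc, mem_Ioo] at hj ⊢; omega)
        rw [mem_Icc] at hj
        congr <;> omega
    _ = ∏ i : Fin n, ∏ j ∈ Ioo (i : ℕ) n, f (t + i + 1) (t + j + 1) :=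
        (Fin.prod_univ_eq_prod_range (fun i => ∏ j ∈ Ioo i n, f (t + i + 1) (t + j + 1)) n).symm
    _ = _ := prod_congr rfl fun i _ => (Fin.prod_Ioi_eq_prod_Ioo_val i _).symm

def keyShapeMatrix (a b : ℕ) (x y : ℕ → R) : Matrix (Fin (a + b)) (Fin (a + b)) R :=
  of fun i j =>
    if (i : ℕ) < a then x (j + 1) ^ (a - 1 - i) else x (j + 1) ^ (b - 1 - (i - a)) * y (j + 1)

theorem keyShapeMatrix_submatrix_finSumFinEquiv {d b : ℕ} {x y : ℕ → R} {c₁ c₂ : R}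
    (hy : ∀ j, 1 ≤ j → j ≤ d + b + b → y j = if j ≤ d + b then c₁ else c₂) :
    (keyShapeMatrix (d + b) b x y).submatrix finSumFinEquiv finSumFinEquiv =
      fromBlocks (rectVandermonde 1 (fun j : Fin (d + b) => x (j + 1)) (d + b))ᵀ
        (rectVandermonde 1 (fun j : Fin b => x (d + b + j + 1)) (d + b))ᵀ
        (c₁ • (rectVandermonde 1 (fun j : Fin (d + b) => x (j + 1)) b)ᵀ)
        (c₂ • (rectVandermonde 1 (fun j : Fin b => x (d + b + j + 1)) b)ᵀ) := by
  ext (i | i) (j | j) <;>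
    simp only [keyShapeMatrix, submatrix_apply, finSumFinEquiv_apply_left,
      finSumFinEquiv_apply_right, fromBlocks_apply₁₁, fromBlocks_apply₁₂, fromBlocks_apply₂₁,
      fromBlocks_apply₂₂, Fin.val_castAdd, Fin.val_natAdd, of_apply, Matrix.smul_apply,
      smul_eq_mul, transpose_apply, rectVandermonde_apply, Pi.one_apply, one_pow, one_mul,
      Fin.val_rev, i.is_lt, if_true]
  · congr 1; omega
  · congr 1; omega
  · rw [if_neg (by omega), hy _ (by omega) (by omega), if_pos (by omega), mul_comm]
    congr 2; omega
  · rw [if_neg (by omega), hy _ (by omega) (by omega), if_neg (by omega), mul_comm]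
    congr 2; omega

theorem haiman_determinant_max_key_shape_specialized_general (a b : ℕ) (hab : b ≤ a)
    (x : ℕ → R) (c₁ c₂ : R) (y : ℕ → R) (hy : ∀ j, 1 ≤ j → j ≤ a + b → y j = if j ≤ a then c₁ else c₂) :
    Matrix.det (Matrix.of fun i j : Fin (a + b) =>
        if (i : ℕ) < a then x ((j : ℕ) + 1) ^ (a - 1 - (i : ℕ))
        else x ((j : ℕ) + 1) ^ (b - 1 - ((i : ℕ) - a)) * y ((j : ℕ) + 1)) =
      (c₂ - c₁) ^ b * (∏ i ∈ Finset.Icc 1 a, ∏ j ∈ Finset.Icc (i + 1) a, (x i - x j)) *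
        ∏ i ∈ Finset.Icc (a + 1) (a + b), ∏ j ∈ Finset.Icc (i + 1) (a + b), (x i - x j) := by
  obtain ⟨d, rfl⟩ := Nat.exists_eq_add_of_le' hab
  set u : Fin (d + b) → R := fun j => x (j + 1)
  set w : Fin b → R := fun j => x (d + b + j + 1)
  set K := c₁ • (1 : Matrix (Fin (d + b)) (Fin (d + b)) R).submatrix (Fin.natAdd d) id
  have hKA : c₁ • (rectVandermonde 1 u b)ᵀ = K * (rectVandermonde 1 u (d + b))ᵀ := by
    rw [smul_mul, one_submatrix_natAdd_mul_transpose_rectVandermonde_one]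
  have hKB : c₂ • (rectVandermonde 1 w b)ᵀ - K * (rectVandermonde 1 w (d + b))ᵀ =
      (c₂ - c₁) • (rectVandermonde 1 w b)ᵀ := by
    rw [smul_mul, one_submatrix_natAdd_mul_transpose_rectVandermonde_one, sub_smul]
  have hprod₁ := prod_Icc_Icc_eq_prod_fin_Ioi 0 (d + b) (fun i j => x i - x j)
  simp only [zero_add] at hprod₁
  change (keyShapeMatrix (d + b) b x y).det = _
  rw [← det_submatrix_equiv_self finSumFinEquiv, keyShapeMatrix_submatrix_finSumFinEquiv hy, hKA,
    det_fromBlocks_mul₂₁, hKB, det_smul, det_transpose_rectVandermonde_one,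
    det_transpose_rectVandermonde_one, Fintype.card_fin, hprod₁, prod_Icc_Icc_eq_prod_fin_Ioi]
  ring

theorem haiman_determinant_max_key_shape_specialized (a b : ℕ) (hb : 1 ≤ b) (hab : b ≤ a)
    (x : ℕ → R) (c₁ c₂ : R) (y : ℕ → R) (hy : ∀ j, 1 ≤ j → j ≤ a + b → y j = if j ≤ a then c₁ else c₂) :
    Matrix.det (Matrix.of fun i j : Fin (a + b) =>
        if (i : ℕ) < a then x ((j : ℕ) + 1) ^ (a - 1 - (i : ℕ))
        else x ((j : ℕ) + 1) ^ (b - 1 - ((i : ℕ) - a)) * y ((j : ℕ) + 1)) =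
      (c₂ - c₁) ^ b * (∏ i ∈ Finset.Icc 1 a, ∏ j ∈ Finset.Icc (i + 1) a, (x i - x j)) *
        ∏ i ∈ Finset.Icc (a + 1) (a + b), ∏ j ∈ Finset.Icc (i + 1) (a + b), (x i - x j) :=
  haiman_determinant_max_key_shape_specialized_general a b hab x c₁ c₂ y hy
end
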